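/- arXiv:1903.02143 — 2 statements merged into one kernel-verified Lean document; each statement's English description precedes it below -/
import Mathlib

section
/- (From Example 2.2 of the paper.) Let M = ℝ² ∖ {(1, t) : 1 ≤ t ≤ 2}, the Minkowski plane with a closed vertical segment removed. Then the Lorentzian distance d_M : M × M → [0,∞] is continuous at the point ((0,0), (0,4)). -/
open Set
open scoped ENNReal

/-- A vector of the Minkowski plane (first coordinate space, second coordinate time)
is future-directed timelike. -/
def FDTimelike (v : ℝ × ℝ) : Prop := |v.1| < v.2

/-- A future-directed timelike curve in `M ⊆ ℝ²` from `p` to `q`: a piecewise `C¹`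
map `γ : [0,1] → M` all of whose one-sided derivatives are future-directed timelike. -/
def IsTimelikeCurveIn (M : Set (ℝ × ℝ)) (γ : ℝ → ℝ × ℝ) (p q : ℝ × ℝ) : Prop :=
  γ 0 = p ∧ γ 1 = q ∧ (∀ s ∈ Set.Icc (0 : ℝ) 1, γ s ∈ M) ∧
  ∃ (m : ℕ) (t : ℕ → ℝ), 0 < m ∧ t 0 = 0 ∧ t m = 1 ∧ (∀ j < m, t j < t (j + 1)) ∧
    ∀ j < m,
      ContDiffOn ℝ 1 γ (Set.Icc (t j) (t (j + 1))) ∧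
      ∀ s ∈ Set.Icc (t j) (t (j + 1)),
        FDTimelike (derivWithin γ (Set.Icc (t j) (t (j + 1))) s)

/-- The Lorentzian length of a curve in the Minkowski plane. -/
noncomputable def Llen (γ : ℝ → ℝ × ℝ) : ℝ :=
  ∫ s in (0 : ℝ)..1, Real.sqrt ((deriv γ s).2 ^ 2 - (deriv γ s).1 ^ 2)

/-- The Lorentzian distance of `M ⊆ ℝ²`. -/
noncomputable def LorDist (M : Set (ℝ × ℝ)) (p q : ℝ × ℝ) : ℝ≥0∞ :=
  ⨆ (γ : ℝ → ℝ × ℝ) (_ : IsTimelikeCurveIn M γ p q), ENNReal.ofReal (Llen γ)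


/-- The Minkowski plane with the closed segment `{1} × [1,2]` removed. -/
def Mslit : Set (ℝ × ℝ) := {p : ℝ × ℝ | ¬ (p.1 = 1 ∧ 1 ≤ p.2 ∧ p.2 ≤ 2)}

/-!
Near `((0,0),(0,4))` both endpoints lie in the strip `|x| < 1`, which is convex and misses the
slit, so the straight segment from `p` to `q` lies in `M`. Integrating the reverse
Cauchy–Schwarz inequality `⟪w, γ'⟫ ≥ |w| |γ'|` with `w = q - p` along the pieces of any timelike
curve from `p` to `q` shows that no such curve, in any `M`, is longer than that segment. Hence
`d_M(p, q) = √((q₂ - p₂)² - (q₁ - p₁)²)` on a neighbourhood of the point, and this is continuous.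
-/

open AffineMap

noncomputable def minkowskiNorm (v : ℝ × ℝ) : ℝ := Real.sqrt (v.2 ^ 2 - v.1 ^ 2)

noncomputable def minkowskiPairing (w : ℝ × ℝ) : ℝ × ℝ →L[ℝ] ℝ :=
  w.2 • ContinuousLinearMap.snd ℝ ℝ ℝ - w.1 • ContinuousLinearMap.fst ℝ ℝ ℝ

@[simp]
lemma minkowskiPairing_apply (w v : ℝ × ℝ) :
    minkowskiPairing w v = w.2 * v.2 - w.1 * v.1 := by
  simp [minkowskiPairing]

@[fun_prop]
lemma continuous_minkowskiNorm : Continuous minkowskiNorm := by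
  unfold minkowskiNorm; fun_prop

lemma FDTimelike.minkowskiNorm_pos {v : ℝ × ℝ} (hv : FDTimelike v) : 0 < minkowskiNorm v := by
  have := abs_lt.1 hv
  exact Real.sqrt_pos.2 (by nlinarith)

lemma FDTimelike.minkowskiPairing_self {v : ℝ × ℝ} (hv : FDTimelike v) :
    minkowskiPairing v v = minkowskiNorm v ^ 2 := by
  have := abs_lt.1 hv
  rw [minkowskiNorm, Real.sq_sqrt (by nlinarith), minkowskiPairing_apply]
  ring

/-- Reverse Cauchy–Schwarz inequality. -/
lemma FDTimelike.minkowskiNorm_mul_le {v w : ℝ × ℝ} (hv : FDTimelike v) (hw : FDTimelike w) :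
    minkowskiNorm w * minkowskiNorm v ≤ minkowskiPairing w v := by
  obtain ⟨hv₁, hv₂⟩ := abs_lt.1 hv
  obtain ⟨hw₁, hw₂⟩ := abs_lt.1 hw
  rw [minkowskiNorm, minkowskiNorm, ← Real.sqrt_mul (by nlinarith), minkowskiPairing_apply]
  have hpos : 0 ≤ w.2 * v.2 - w.1 * v.1 := by
    nlinarith [mul_pos (sub_pos.2 hw₂) (neg_lt_iff_pos_add.1 hv₁),
      mul_pos (neg_lt_iff_pos_add.1 hw₁) (sub_pos.2 hv₂)]
  exact (Real.sqrt_le_left hpos).2 (by nlinarith [sq_nonneg (w.2 * v.1 - w.1 * v.2)])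

section CurvePiece

variable {γ : ℝ → ℝ × ℝ} {a b : ℝ}

lemma continuousOn_minkowskiNorm_derivWithin (hab : a < b) (hγ : ContDiffOn ℝ 1 γ (Icc a b)) :
    ContinuousOn (fun s => minkowskiNorm (derivWithin γ (Icc a b) s)) (Icc a b) :=
  continuous_minkowskiNorm.comp_continuousOn
    (hγ.continuousOn_derivWithin (uniqueDiffOn_Icc hab) le_rfl)

lemma eqOn_minkowskiNorm_deriv (hab : a < b) :
    EqOn (fun s => minkowskiNorm (derivWithin γ (Icc a b) s))
      (fun s => minkowskiNorm (deriv γ s)) (uIoo a b) := by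
  intro s hs
  rw [uIoo_of_le hab.le] at hs
  simp only [derivWithin_of_mem_nhds (Icc_mem_nhds hs.1 hs.2)]

lemma intervalIntegrable_minkowskiNorm_deriv (hab : a < b) (hγ : ContDiffOn ℝ 1 γ (Icc a b)) :
    IntervalIntegrable (fun s => minkowskiNorm (deriv γ s)) MeasureTheory.volume a b :=
  ((continuousOn_minkowskiNorm_derivWithin hab hγ).intervalIntegrable_of_Icc hab.le).congr_uIoo
    (eqOn_minkowskiNorm_deriv hab)

lemma minkowskiNorm_mul_integral_le (hab : a < b) (hγ : ContDiffOn ℝ 1 γ (Icc a b))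
    (hγ' : ∀ s ∈ Icc a b, FDTimelike (derivWithin γ (Icc a b) s)) {w : ℝ × ℝ}
    (hw : FDTimelike w) :
    minkowskiNorm w * ∫ s in a..b, minkowskiNorm (deriv γ s) ≤
      minkowskiPairing w (γ b - γ a) := by
  have hg : ContinuousOn (derivWithin γ (Icc a b)) (Icc a b) :=
    hγ.continuousOn_derivWithin (uniqueDiffOn_Icc hab) le_rfl
  calc minkowskiNorm w * ∫ s in a..b, minkowskiNorm (deriv γ s)
      = ∫ s in a..b, minkowskiNorm w * minkowskiNorm (derivWithin γ (Icc a b) s) := by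
        rw [intervalIntegral.integral_const_mul,
          intervalIntegral.integral_congr_uIoo (eqOn_minkowskiNorm_deriv hab)]
    _ ≤ ∫ s in a..b, minkowskiPairing w (derivWithin γ (Icc a b) s) :=
        intervalIntegral.integral_mono_on hab.le
          (((continuousOn_minkowskiNorm_derivWithin hab hγ).intervalIntegrable_of_Icc
            hab.le).const_mul _)
          (((minkowskiPairing w).continuous.comp_continuousOn hg).intervalIntegrable_of_Icc
            hab.le)
          fun s hs => (hγ' s hs).minkowskiNorm_mul_le hw
    _ = minkowskiPairing w (γ b - γ a) := by
        rw [(minkowskiPairing w).intervalIntegral_comp_comm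
            (hg.intervalIntegrable_of_Icc hab.le),
          intervalIntegral.integral_derivWithin_Icc_of_contDiffOn_Icc hγ hab.le]

end CurvePiece

/-- Reverse triangle inequality. -/
lemma Llen_le_minkowskiNorm {M : Set (ℝ × ℝ)} {p q : ℝ × ℝ} {γ : ℝ → ℝ × ℝ}
    (hγ : IsTimelikeCurveIn M γ p q) (hpq : FDTimelike (q - p)) :
    Llen γ ≤ minkowskiNorm (q - p) := by
  obtain ⟨hγ0, hγ1, -, m, t, -, ht0, htm, hlt, hpiece⟩ := hγ
  set w := q - p
  have hsplit :
      ∑ j ∈ Finset.range m, ∫ s in t j..t (j + 1), minkowskiNorm (deriv γ s) = Llen γ := by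
    rw [intervalIntegral.sum_integral_adjacent_intervals fun j hj =>
      intervalIntegrable_minkowskiNorm_deriv (hlt j hj) (hpiece j hj).1, ht0, htm]
    rfl
  have hmul : minkowskiNorm w * Llen γ ≤ minkowskiNorm w * minkowskiNorm w :=
    calc minkowskiNorm w * Llen γ
        = ∑ j ∈ Finset.range m,
            minkowskiNorm w * ∫ s in t j..t (j + 1), minkowskiNorm (deriv γ s) := by
          rw [← hsplit, Finset.mul_sum]
      _ ≤ ∑ j ∈ Finset.range m, minkowskiPairing w (γ (t (j + 1)) - γ (t j)) :=
          Finset.sum_le_sum fun j hj =>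
            minkowskiNorm_mul_integral_le (hlt j (Finset.mem_range.1 hj))
              (hpiece j (Finset.mem_range.1 hj)).1 (hpiece j (Finset.mem_range.1 hj)).2 hpq
      _ = minkowskiPairing w w := by
          simp only [map_sub]
          rw [Finset.sum_range_sub (fun j => minkowskiPairing w (γ (t j))), ht0, htm, hγ0, hγ1,
            ← map_sub]
      _ = minkowskiNorm w * minkowskiNorm w := by rw [hpq.minkowskiPairing_self, sq]
  exact le_of_mul_le_mul_left hmul hpq.minkowskiNorm_pos

lemma isTimelikeCurveIn_lineMap {M : Set (ℝ × ℝ)} {p q : ℝ × ℝ}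
    (hM : ∀ s ∈ Icc (0 : ℝ) 1, lineMap p q s ∈ M) (hpq : FDTimelike (q - p)) :
    IsTimelikeCurveIn M (lineMap p q) p q := by
  refine ⟨lineMap_apply_zero p q, lineMap_apply_one p q, hM, 1, (↑), one_pos, Nat.cast_zero,
    Nat.cast_one, fun j _ => by simp, fun j hj => ?_⟩
  obtain rfl : j = 0 := Nat.lt_one_iff.1 hj
  refine ⟨(contDiff_lineMap p q).contDiffOn, fun s hs => ?_⟩
  simp only [Nat.cast_zero, zero_add, Nat.cast_one] at hs ⊢
  rwa [hasDerivAt_lineMap.hasDerivWithinAt.derivWithin (uniqueDiffOn_Icc one_pos s hs)]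

lemma Llen_lineMap (p q : ℝ × ℝ) : Llen (lineMap p q) = minkowskiNorm (q - p) := by
  simp [Llen, hasDerivAt_lineMap.deriv, minkowskiNorm]

lemma lorDist_eq_of_lineMap_mem {M : Set (ℝ × ℝ)} {p q : ℝ × ℝ}
    (hM : ∀ s ∈ Icc (0 : ℝ) 1, lineMap p q s ∈ M) (hpq : FDTimelike (q - p)) :
    LorDist M p q = ENNReal.ofReal (minkowskiNorm (q - p)) :=
  le_antisymm (iSup₂_le fun _ hγ => ENNReal.ofReal_le_ofReal (Llen_le_minkowskiNorm hγ hpq))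
    (le_iSup₂_of_le (lineMap p q) (isTimelikeCurveIn_lineMap hM hpq) (by rw [Llen_lineMap]))

lemma lineMap_mem_Mslit {p q : ℝ × ℝ} (hp : |p.1| < 1) (hq : |q.1| < 1) {s : ℝ}
    (hs : s ∈ Icc (0 : ℝ) 1) : lineMap p q s ∈ Mslit := by
  have hstrip : Convex ℝ (Prod.fst ⁻¹' Ioo (-1 : ℝ) 1) :=
    (convex_Ioo (-1 : ℝ) 1).linear_preimage (LinearMap.fst ℝ ℝ ℝ)
  have h := hstrip.lineMap_mem (abs_lt.1 hp) (abs_lt.1 hq) hs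
  exact fun hslit => h.2.ne hslit.1

/-- In the slit Minkowski plane of Example 2.2, the Lorentzian distance
`d : M × M → [0,∞]` is continuous at `((0,0),(0,4))`. -/
theorem stmt_9 :
    ContinuousWithinAt (fun pq : (ℝ × ℝ) × (ℝ × ℝ) => LorDist Mslit pq.1 pq.2)
      (Mslit ×ˢ Mslit) (((0 : ℝ), (0 : ℝ)), ((0 : ℝ), (4 : ℝ))) := by
  set x₀ : (ℝ × ℝ) × (ℝ × ℝ) := (((0 : ℝ), (0 : ℝ)), ((0 : ℝ), (4 : ℝ)))
  set U : Set ((ℝ × ℝ) × (ℝ × ℝ)) :=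
    {pq | |pq.1.1| < 1} ∩ {pq | |pq.2.1| < 1} ∩ {pq | FDTimelike (pq.2 - pq.1)}
  have hU : IsOpen U :=
    ((isOpen_lt (by fun_prop) continuous_const).inter
      (isOpen_lt (by fun_prop) continuous_const)).inter (isOpen_lt (by fun_prop) (by fun_prop))
  have hmem : x₀ ∈ U := by norm_num [x₀, U, FDTimelike]
  have hlocal : (fun pq : (ℝ × ℝ) × (ℝ × ℝ) => LorDist Mslit pq.1 pq.2) =ᶠ[nhds x₀]
      fun pq => ENNReal.ofReal (minkowskiNorm (pq.2 - pq.1)) := by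
    filter_upwards [hU.mem_nhds hmem] with pq ⟨⟨hp, hq⟩, hpq⟩
    exact lorDist_eq_of_lineMap_mem (fun s hs => lineMap_mem_Mslit hp hq hs) hpq
  have hcont :
      Continuous fun pq : (ℝ × ℝ) × (ℝ × ℝ) => ENNReal.ofReal (minkowskiNorm (pq.2 - pq.1)) :=
    ENNReal.continuous_ofReal.comp (by fun_prop)
  exact (hcont.continuousAt.congr hlocal.symm).continuousWithinAt
end

section
/- (From Example 3.3 of the paper.) Let M = ℝ² ∖ {(0,0)} and let Ω : M → (0,∞) be given by Ω(x, t) = 1/(x² + t²), so that the metric is Ω²(−dt² + dx²). Then for every point q = (q₁, q₂) ∈ M with q₂ ≥ |q₁| one has d_{M,Ω}((0,−1), q) = ∞. -/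
open Set
open scoped ENNReal

/-- The conformal Lorentzian length of a curve with conformal factor `Ω`. -/
noncomputable def LlenConf (Ω : ℝ × ℝ → ℝ) (γ : ℝ → ℝ × ℝ) : ℝ :=
  ∫ s in (0 : ℝ)..1, Ω (γ s) * Real.sqrt ((deriv γ s).2 ^ 2 - (deriv γ s).1 ^ 2)

/-- The conformal Lorentzian distance of `M ⊆ ℝ²` with conformal factor `Ω`. -/
noncomputable def LorDistConf (M : Set (ℝ × ℝ)) (Ω : ℝ × ℝ → ℝ) (p q : ℝ × ℝ) : ℝ≥0∞ :=
  ⨆ (γ : ℝ → ℝ × ℝ) (_ : IsTimelikeCurveIn M γ p q), ENNReal.ofReal (LlenConf Ω γ)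

/-- The punctured Minkowski plane `ℝ² ∖ {(0,0)}`. -/
def Mpunct : Set (ℝ × ℝ) := {p : ℝ × ℝ | p ≠ (0, 0)}

/-- The conformal factor `Ω(x,t) = 1/(x² + t²)` of Example 3.3. -/
noncomputable def OmegaPunct (p : ℝ × ℝ) : ℝ := 1 / (p.1 ^ 2 + p.2 ^ 2)

/-! The segment from `(0,-1)` to `(ε,0)` ends within distance `√2 |ε|` of the removed origin,
where `Ω ≥ 1 / (2ε²)`; over the last `|ε|` of its parameter interval this already gives
`Ω`-length at least `1 / (4|ε|)`. Choosing the sign of `ε` so that `(ε,0)` lies in the timelike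
past of `q`, and following the segment by the segment from `(ε,0)` to `q`, yields future-directed
timelike curves in `M` from `(0,-1)` to `q` of arbitrarily large `Ω`-length. -/

open AffineMap MeasureTheory

lemma FDTimelike.smul {v : ℝ × ℝ} (hv : FDTimelike v) {c : ℝ} (hc : 0 < c) :
    FDTimelike (c • v) := by
  simp only [FDTimelike, Prod.smul_fst, Prod.smul_snd, smul_eq_mul, abs_mul, abs_of_pos hc] at hv ⊢
  exact mul_lt_mul_of_pos_left hv hc

noncomputable def lenIntegrand (Ω : ℝ × ℝ → ℝ) (γ : ℝ → ℝ × ℝ) (s : ℝ) : ℝ :=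
  Ω (γ s) * √((deriv γ s).2 ^ 2 - (deriv γ s).1 ^ 2)

lemma LlenConf_eq_integral_lenIntegrand (Ω : ℝ × ℝ → ℝ) (γ : ℝ → ℝ × ℝ) :
    LlenConf Ω γ = ∫ s in (0 : ℝ)..1, lenIntegrand Ω γ s := rfl

lemma lenIntegrand_of_eventuallyEq_comp_mul_sub {Ω : ℝ × ℝ → ℝ} {γ δ : ℝ → ℝ × ℝ} {c d s : ℝ}
    (hc : 0 ≤ c) (h : γ =ᶠ[nhds s] fun u => δ (c * u - d)) :
    lenIntegrand Ω γ s = c * lenIntegrand Ω δ (c * s - d) := by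
  have hd : deriv γ s = c • deriv δ (c * s - d) := by
    rw [h.deriv_eq, deriv_comp_mul_left c (fun y => δ (y - d)) s, deriv_comp_sub_const]
  have hsqrt (v : ℝ × ℝ) : √((c • v).2 ^ 2 - (c • v).1 ^ 2) = c * √(v.2 ^ 2 - v.1 ^ 2) := by
    simp only [Prod.smul_fst, Prod.smul_snd, smul_eq_mul]
    rw [show (c * v.2) ^ 2 - (c * v.1) ^ 2 = c ^ 2 * (v.2 ^ 2 - v.1 ^ 2) by ring,
      Real.sqrt_mul (sq_nonneg c), Real.sqrt_sq hc]
  rw [lenIntegrand, lenIntegrand, hd, hsqrt, h.eq_of_nhds]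
  ring

lemma lenIntegrand_nonneg {Ω : ℝ × ℝ → ℝ} (hΩ : ∀ x, 0 ≤ Ω x) (γ : ℝ → ℝ × ℝ) (s : ℝ) :
    0 ≤ lenIntegrand Ω γ s :=
  mul_nonneg (hΩ _) (Real.sqrt_nonneg _)

lemma LlenConf_nonneg {Ω : ℝ × ℝ → ℝ} (hΩ : ∀ x, 0 ≤ Ω x) (γ : ℝ → ℝ × ℝ) : 0 ≤ LlenConf Ω γ :=
  intervalIntegral.integral_nonneg zero_le_one fun s _ => lenIntegrand_nonneg hΩ γ s

lemma ofReal_LlenConf_le_LorDistConf {M : Set (ℝ × ℝ)} {Ω : ℝ × ℝ → ℝ} {γ : ℝ → ℝ × ℝ}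
    {p q : ℝ × ℝ} (hγ : IsTimelikeCurveIn M γ p q) :
    ENNReal.ofReal (LlenConf Ω γ) ≤ LorDistConf M Ω p q :=
  le_iSup₂ (f := fun γ (_ : IsTimelikeCurveIn M γ p q) => ENNReal.ofReal (LlenConf Ω γ)) γ hγ

lemma lenIntegrand_lineMap (Ω : ℝ × ℝ → ℝ) (p r : ℝ × ℝ) :
    lenIntegrand Ω (lineMap p r) =
      fun τ => Ω (lineMap p r τ) * √((r - p).2 ^ 2 - (r - p).1 ^ 2) := by
  ext τ
  rw [lenIntegrand, hasDerivAt_lineMap.deriv]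

section Rescale

variable {f g : ℝ → ℝ} {a b a' b' c d : ℝ}

lemma IntervalIntegrable.of_eqOn_comp_mul_sub (hc : c ≠ 0)
    (hg : IntervalIntegrable g volume a' b') (ha : c * a - d = a') (hb : c * b - d = b')
    (h : EqOn f (fun s => c * g (c * s - d)) (uIoo a b)) :
    IntervalIntegrable f volume a b := by
  have hcomp := ((hg.comp_sub_right d).comp_mul_left (c := c)).const_mul c
  rw [← ha, ← hb, sub_add_cancel, sub_add_cancel, mul_div_cancel_left₀ _ hc,
    mul_div_cancel_left₀ _ hc] at hcomp
  exact hcomp.congr_uIoo h.symm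

lemma integral_eq_of_eqOn_comp_mul_sub (hc : c ≠ 0) (ha : c * a - d = a') (hb : c * b - d = b')
    (h : EqOn f (fun s => c * g (c * s - d)) (uIoo a b)) :
    ∫ s in a..b, f s = ∫ τ in a'..b', g τ := by
  rw [intervalIntegral.integral_congr_uIoo h, intervalIntegral.integral_const_mul,
    intervalIntegral.integral_comp_mul_sub (fun x => g x) hc, smul_eq_mul, ha, hb,
    mul_inv_cancel_left₀ hc]

end Rescale

noncomputable def curveTrans (γ₁ γ₂ : ℝ → ℝ × ℝ) (s : ℝ) : ℝ × ℝ :=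
  if s ≤ 1 / 2 then γ₁ (2 * s) else γ₂ (2 * s - 1)

section CurveTrans

variable {Ω : ℝ × ℝ → ℝ} {γ₁ γ₂ : ℝ → ℝ × ℝ}

lemma lenIntegrand_curveTrans_of_lt {s : ℝ} (hs : s < 1 / 2) :
    lenIntegrand Ω (curveTrans γ₁ γ₂) s = 2 * lenIntegrand Ω γ₁ (2 * s - 0) := by
  refine lenIntegrand_of_eventuallyEq_comp_mul_sub zero_le_two ?_
  filter_upwards [Iio_mem_nhds hs] with u hu
  rw [curveTrans, if_pos (le_of_lt (mem_Iio.1 hu)), sub_zero]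

lemma lenIntegrand_curveTrans_of_gt {s : ℝ} (hs : 1 / 2 < s) :
    lenIntegrand Ω (curveTrans γ₁ γ₂) s = 2 * lenIntegrand Ω γ₂ (2 * s - 1) := by
  refine lenIntegrand_of_eventuallyEq_comp_mul_sub zero_le_two ?_
  filter_upwards [Ioi_mem_nhds hs] with u hu
  rw [curveTrans, if_neg (not_le.2 (mem_Ioi.1 hu))]

lemma LlenConf_curveTrans (h₁ : IntervalIntegrable (lenIntegrand Ω γ₁) volume 0 1)
    (h₂ : IntervalIntegrable (lenIntegrand Ω γ₂) volume 0 1) :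
    LlenConf Ω (curveTrans γ₁ γ₂) = LlenConf Ω γ₁ + LlenConf Ω γ₂ := by
  have eq₁ : EqOn (lenIntegrand Ω (curveTrans γ₁ γ₂))
      (fun s => 2 * lenIntegrand Ω γ₁ (2 * s - 0)) (uIoo 0 (1 / 2)) := by
    rw [uIoo_of_le (by norm_num)]
    exact fun s hs => lenIntegrand_curveTrans_of_lt hs.2
  have eq₂ : EqOn (lenIntegrand Ω (curveTrans γ₁ γ₂))
      (fun s => 2 * lenIntegrand Ω γ₂ (2 * s - 1)) (uIoo (1 / 2) 1) := by
    rw [uIoo_of_le (by norm_num)]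
    exact fun s hs => lenIntegrand_curveTrans_of_gt hs.1
  rw [LlenConf_eq_integral_lenIntegrand, ← intervalIntegral.integral_add_adjacent_intervals
    (h₁.of_eqOn_comp_mul_sub two_ne_zero (by norm_num) (by norm_num) eq₁)
    (h₂.of_eqOn_comp_mul_sub two_ne_zero (by norm_num) (by norm_num) eq₂),
    integral_eq_of_eqOn_comp_mul_sub (a' := 0) (b' := 1) two_ne_zero (by norm_num) (by norm_num)
      eq₁,
    integral_eq_of_eqOn_comp_mul_sub (a' := 0) (b' := 1) two_ne_zero (by norm_num) (by norm_num)
      eq₂]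
  rfl

end CurveTrans

lemma contDiffOn_fdTimelike_derivWithin_of_eqOn_lineMap {γ : ℝ → ℝ × ℝ} {x y : ℝ × ℝ}
    {a b c d : ℝ} (hab : a < b) (hc : 0 < c) (hxy : FDTimelike (y - x))
    (h : EqOn γ (fun s => lineMap x y (c * s - d)) (Icc a b)) :
    ContDiffOn ℝ 1 γ (Icc a b) ∧ ∀ s ∈ Icc a b, FDTimelike (derivWithin γ (Icc a b) s) := by
  have hderiv (s : ℝ) : HasDerivAt (fun s => lineMap x y (c * s - d)) ((c * 1) • (y - x)) s :=
    hasDerivAt_lineMap.scomp s (((hasDerivAt_id s).const_mul c).sub_const d)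
  refine ⟨ContDiffOn.congr (by fun_prop) h, fun s hs => ?_⟩
  rw [derivWithin_congr h (h hs), (hderiv s).hasDerivWithinAt.derivWithin
    (uniqueDiffOn_Icc hab s hs)]
  exact hxy.smul (by simpa using hc)

lemma isTimelikeCurveIn_curveTrans_lineMap {M : Set (ℝ × ℝ)} {p r q : ℝ × ℝ}
    (hpr : FDTimelike (r - p)) (hrq : FDTimelike (q - r))
    (hM₁ : segment ℝ p r ⊆ M) (hM₂ : segment ℝ r q ⊆ M) :
    IsTimelikeCurveIn M (curveTrans (lineMap p r) (lineMap r q)) p q := by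
  refine ⟨by simp [curveTrans], by norm_num [curveTrans], fun s hs => ?_,
    2, fun j => j / 2, two_pos, by simp, by norm_num, fun j _ => by push_cast; linarith, ?_⟩
  · unfold curveTrans
    split_ifs with h
    · exact hM₁ (lineMap_mem_segment ℝ p r ⟨by linarith [hs.1], by linarith⟩)
    · exact hM₂ (lineMap_mem_segment ℝ r q ⟨by linarith, by linarith [hs.2]⟩)
  · intro j hj
    interval_cases j
    · refine contDiffOn_fdTimelike_derivWithin_of_eqOn_lineMap (d := 0) (by norm_num) two_pos hpr
        fun s hs => ?_
      simp_all [curveTrans]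
    · refine contDiffOn_fdTimelike_derivWithin_of_eqOn_lineMap (d := 1) (by norm_num) two_pos hrq
        fun s hs => ?_
      have hs₁ : 1 / 2 ≤ s := by simpa using hs.1
      rw [curveTrans]
      split_ifs with h
      · norm_num [le_antisymm h hs₁]
      · rfl

lemma intervalIntegrable_lenIntegrand_lineMap {Ω : ℝ × ℝ → ℝ} {p r : ℝ × ℝ}
    (hΩ : ContinuousOn Ω (segment ℝ p r)) :
    IntervalIntegrable (lenIntegrand Ω (lineMap p r)) volume 0 1 := by
  rw [lenIntegrand_lineMap]
  refine ContinuousOn.intervalIntegrable (ContinuousOn.mul ?_ continuousOn_const)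
  rw [uIcc_of_le zero_le_one]
  exact hΩ.comp lineMap_continuous.continuousOn fun τ hτ => lineMap_mem_segment ℝ p r hτ

lemma omegaPunct_nonneg (x : ℝ × ℝ) : 0 ≤ OmegaPunct x := by
  unfold OmegaPunct
  positivity

lemma continuousOn_omegaPunct : ContinuousOn OmegaPunct Mpunct := by
  refine continuousOn_const.div (by fun_prop) fun x hx h => hx ?_
  have h₁ : x.1 = 0 := by nlinarith [sq_nonneg x.1, sq_nonneg x.2]
  have h₂ : x.2 = 0 := by nlinarith [sq_nonneg x.1, sq_nonneg x.2]
  exact Prod.ext h₁ h₂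

lemma segment_subset_Mpunct {x : ℝ} {b : ℝ × ℝ} (hx : x ≠ 0) (hb : b.2 ≠ 0) :
    segment ℝ (x, 0) b ⊆ Mpunct := by
  rintro _ ⟨μ, θ, hμ, hθ, hμθ, rfl⟩ h
  have h₂ : θ * b.2 = 0 := by simpa using congrArg Prod.snd h
  have hθ0 : θ = 0 := (mul_eq_zero.1 h₂).resolve_right hb
  simp [hθ0, hx] at h
  linarith

lemma lenIntegrand_omegaPunct_lineMap (ε τ : ℝ) :
    lenIntegrand OmegaPunct (lineMap ((0 : ℝ), (-1 : ℝ)) (ε, 0)) τ =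
      1 / ((τ * ε) ^ 2 + (τ - 1) ^ 2) * √(1 - ε ^ 2) := by
  simp only [lenIntegrand_lineMap, OmegaPunct, lineMap_apply_module]
  congr 2 <;> simp

lemma one_div_four_sq_le_lenIntegrand_omegaPunct_lineMap {ε τ : ℝ} (hε : ε ≠ 0)
    (hε' : |ε| ≤ 1 / 2) (hτ₁ : 1 - |ε| ≤ τ) (hτ₂ : τ ≤ 1) :
    1 / (4 * ε ^ 2) ≤ lenIntegrand OmegaPunct (lineMap ((0 : ℝ), (-1 : ℝ)) (ε, 0)) τ := by
  have hτ : 0 < τ := by linarith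
  have hD : (τ * ε) ^ 2 + (τ - 1) ^ 2 ≤ 2 * ε ^ 2 := by
    have h₁ : τ ^ 2 * ε ^ 2 ≤ ε ^ 2 :=
      mul_le_of_le_one_left (sq_nonneg ε) (pow_le_one₀ hτ.le hτ₂)
    have h₂ : (τ - 1) ^ 2 ≤ |ε| ^ 2 := sq_le_sq' (by linarith) (by linarith)
    rw [sq_abs] at h₂
    linarith [mul_pow τ ε 2]
  have hDpos : 0 < (τ * ε) ^ 2 + (τ - 1) ^ 2 := by
    have : τ * ε ≠ 0 := mul_ne_zero hτ.ne' hε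
    positivity
  have hsqrt : 1 / 2 ≤ √(1 - ε ^ 2) := by
    have : ε ^ 2 ≤ 1 / 4 := by
      rw [← sq_abs]
      nlinarith [abs_nonneg ε]
    rw [Real.le_sqrt' (by norm_num)]
    linarith
  calc 1 / (4 * ε ^ 2) = 1 / (2 * ε ^ 2) * (1 / 2) := by ring
    _ ≤ 1 / ((τ * ε) ^ 2 + (τ - 1) ^ 2) * √(1 - ε ^ 2) :=
      mul_le_mul (one_div_le_one_div_of_le hDpos hD) hsqrt (by norm_num) (by positivity)
    _ = _ := (lenIntegrand_omegaPunct_lineMap ε τ).symm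

lemma one_div_four_abs_le_LlenConf_omegaPunct_lineMap {ε : ℝ} (hε : ε ≠ 0) (hε' : |ε| ≤ 1 / 2) :
    1 / (4 * |ε|) ≤ LlenConf OmegaPunct (lineMap ((0 : ℝ), (-1 : ℝ)) (ε, 0)) := by
  set f := lenIntegrand OmegaPunct (lineMap ((0 : ℝ), (-1 : ℝ)) (ε, 0))
  have hint : IntervalIntegrable f volume 0 1 :=
    intervalIntegrable_lenIntegrand_lineMap (continuousOn_omegaPunct.mono (by
      rw [segment_symm]
      exact segment_subset_Mpunct hε (by norm_num)))
  have hε0 : 0 < |ε| := abs_pos.2 hε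
  have hint' : IntervalIntegrable f volume (1 - |ε|) 1 := hint.mono_set (by
    rw [uIcc_of_le (by linarith), uIcc_of_le zero_le_one]
    exact Icc_subset_Icc (by linarith) le_rfl)
  calc 1 / (4 * |ε|) = ∫ _ in (1 - |ε|)..1, 1 / (4 * ε ^ 2) := by
        rw [intervalIntegral.integral_const, smul_eq_mul, ← sq_abs ε]
        field_simp
        ring
    _ ≤ ∫ τ in (1 - |ε|)..1, f τ :=
        intervalIntegral.integral_mono_on (by linarith) intervalIntegrable_const hint'
          fun τ hτ => one_div_four_sq_le_lenIntegrand_omegaPunct_lineMap hε hε' hτ.1 hτ.2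
    _ ≤ ∫ τ in (0 : ℝ)..1, f τ :=
        intervalIntegral.integral_mono_interval (by linarith) (by linarith) le_rfl
          (Filter.Eventually.of_forall (lenIntegrand_nonneg omegaPunct_nonneg _)) hint

lemma snd_pos_of_abs_fst_le {q : ℝ × ℝ} (hq : q ≠ (0, 0)) (hcone : |q.1| ≤ q.2) : 0 < q.2 := by
  refine lt_of_le_of_ne ((abs_nonneg _).trans hcone) fun h => hq ?_
  have h₁ : q.1 = 0 := abs_nonpos_iff.1 (h ▸ hcone)
  exact Prod.ext h₁ h.symm

lemma exists_ne_zero_fdTimelike_sub {q : ℝ × ℝ} (hcone : |q.1| ≤ q.2) (hq₂ : 0 < q.2) {δ : ℝ}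
    (hδ : 0 < δ) : ∃ ε : ℝ, ε ≠ 0 ∧ |ε| < δ ∧ FDTimelike (q - (ε, 0)) := by
  obtain ⟨η, hη, hηδ, hηq⟩ : ∃ η, 0 < η ∧ η < δ ∧ η < q.2 :=
    ⟨min δ q.2 / 2, by positivity, by linarith [min_le_left δ q.2],
      by linarith [min_le_right δ q.2]⟩
  simp only [FDTimelike, Prod.fst_sub, Prod.snd_sub, sub_zero]
  rcases le_or_gt 0 q.1 with h | h
  · refine ⟨η, hη.ne', by rwa [abs_of_pos hη], abs_sub_lt_iff.2 ⟨?_, ?_⟩⟩ <;>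
      linarith [le_abs_self q.1]
  · refine ⟨-η, by linarith, by rwa [abs_neg, abs_of_pos hη], abs_sub_lt_iff.2 ⟨?_, ?_⟩⟩ <;>
      linarith [neg_abs_le q.1]

/-- Example 3.3: with the metric `Ω²(−dt² + dx²)` on `ℝ² ∖ {(0,0)}`, every point `q`
of the closed future cone of the origin is at infinite conformal Lorentzian distance
from `(0,−1)`. -/
theorem stmt_13 (q : ℝ × ℝ) (hq : q ≠ (0, 0)) (hcone : |q.1| ≤ q.2) :
    LorDistConf Mpunct OmegaPunct ((0 : ℝ), (-1 : ℝ)) q = ⊤ := by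
  have hq₂ := snd_pos_of_abs_fst_le hq hcone
  refine ENNReal.eq_top_of_forall_nnreal_le fun R => ?_
  obtain ⟨ε, hε, hεR, hqε⟩ :=
    exists_ne_zero_fdTimelike_sub hcone hq₂ (δ := 1 / (4 * (R + 1))) (by positivity)
  have hε₁ : |ε| ≤ 1 / 2 := by
    have : 1 / (4 * ((R : ℝ) + 1)) ≤ 1 / 4 := by gcongr; linarith [R.coe_nonneg]
    linarith
  have hseg₁ : segment ℝ ((0 : ℝ), (-1 : ℝ)) (ε, 0) ⊆ Mpunct := by
    rw [segment_symm]
    exact segment_subset_Mpunct hε (by norm_num)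
  have hseg₂ : segment ℝ (ε, 0) q ⊆ Mpunct := segment_subset_Mpunct hε hq₂.ne'
  have hcurve := isTimelikeCurveIn_curveTrans_lineMap
    (by simp only [FDTimelike]; norm_num; linarith) hqε hseg₁ hseg₂
  refine le_trans ?_ (ofReal_LlenConf_le_LorDistConf (Ω := OmegaPunct) hcurve)
  rw [← ENNReal.ofReal_coe_nnreal, LlenConf_curveTrans
    (intervalIntegrable_lenIntegrand_lineMap (continuousOn_omegaPunct.mono hseg₁))
    (intervalIntegrable_lenIntegrand_lineMap (continuousOn_omegaPunct.mono hseg₂))]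
  refine ENNReal.ofReal_le_ofReal ?_
  calc (R : ℝ) ≤ 1 / (4 * |ε|) := by
        rw [lt_div_iff₀ (by positivity)] at hεR
        rw [le_div_iff₀ (by positivity)]
        nlinarith [abs_nonneg ε]
    _ ≤ LlenConf OmegaPunct (lineMap ((0 : ℝ), (-1 : ℝ)) (ε, 0)) :=
        one_div_four_abs_le_LlenConf_omegaPunct_lineMap hε hε₁
    _ ≤ _ := le_add_of_nonneg_right (LlenConf_nonneg omegaPunct_nonneg _)
end
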